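/- arXiv:2003.08877 — 6 statements merged into one kernel-verified Lean document; each statement's English description precedes it below -/
import Mathlib

section
/- Let C and A be complete lattices, f_C : C → C and f_A : A → A monotone functions, and ⟨α, γ⟩ : C → A a Galois insertion. Assume α ∘ f_C ≤ f_A ∘ α (soundness), f_A ∘ α ≤ α ∘ f_C (completeness for the abstraction), and γ ∘ f_A ⊑ f_C ∘ γ (completeness for the concretisation), all pointwise. Then α(μ f_C) = μ f_A, α(ν f_C) = ν f_A, ν f_C = γ(ν f_A), and μ f_C ⊑ γ(μ f_A). -/
/-- Least fixpoint of `f` (Knaster–Tarski construction). -/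
def muFix {L : Type*} [CompleteLattice L] (f : L → L) : L := sInf {x | f x ≤ x}

/-- Greatest fixpoint of `f` (Knaster–Tarski construction). -/
def nuFix {L : Type*} [CompleteLattice L] (f : L → L) : L := sSup {x | x ≤ f x}

lemma muFix_le {L : Type*} [CompleteLattice L] {f : L → L} {x : L} (h : f x ≤ x) :
    muFix f ≤ x := sInf_le h

lemma le_nuFix {L : Type*} [CompleteLattice L] {f : L → L} {x : L} (h : x ≤ f x) :
    x ≤ nuFix f := le_sSup h

lemma muFix_fixed {L : Type*} [CompleteLattice L] {f : L → L} (hf : Monotone f) :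
    f (muFix f) = muFix f := by
  have h1 : f (muFix f) ≤ muFix f :=
    le_sInf fun x hx => (hf (sInf_le hx)).trans hx
  exact le_antisymm h1 (muFix_le (hf h1))

lemma nuFix_fixed {L : Type*} [CompleteLattice L] {f : L → L} (hf : Monotone f) :
    f (nuFix f) = nuFix f := by
  have h1 : nuFix f ≤ f (nuFix f) :=
    sSup_le fun x hx => hx.trans (hf (le_sSup hx))
  exact le_antisymm (le_nuFix (hf h1)) h1

/-- Galois insertions, single fixpoints: assuming soundness, completeness for
the abstraction and completeness for the concretisation, we get
`α (μ f_C) = μ f_A`, `α (ν f_C) = ν f_A`, `ν f_C = γ (ν f_A)` and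
`μ f_C ⊑ γ (μ f_A)`. -/
theorem galois_insertion_single
    {C A : Type*} [CompleteLattice C] [CompleteLattice A]
    (fC : C → C) (fA : A → A) (α : C → A) (γ : A → C)
    (hfC : Monotone fC) (hfA : Monotone fA)
    (hgc : GaloisConnection α γ) (hins : ∀ a : A, α (γ a) = a)
    (hsound : ∀ c : C, α (fC c) ≤ fA (α c))
    (hcomplA : ∀ c : C, fA (α c) ≤ α (fC c))
    (hcomplG : ∀ a : A, γ (fA a) ≤ fC (γ a)) :
    α (muFix fC) = muFix fA ∧ α (nuFix fC) = nuFix fA ∧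
      nuFix fC = γ (nuFix fA) ∧ muFix fC ≤ γ (muFix fA) := by
  -- γ (μ fA) is a prefixpoint of fC
  have h4 : muFix fC ≤ γ (muFix fA) := by
    apply muFix_le
    apply hgc.le_iff_le.mp
    calc α (fC (γ (muFix fA))) ≤ fA (α (γ (muFix fA))) := hsound _
      _ = fA (muFix fA) := by rw [hins]
      _ = muFix fA := muFix_fixed hfA
  have h1 : α (muFix fC) = muFix fA := by
    apply le_antisymm
    · exact hgc.le_iff_le.mpr h4
    · apply muFix_le
      calc fA (α (muFix fC)) ≤ α (fC (muFix fC)) := hcomplA _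
        _ = α (muFix fC) := by rw [muFix_fixed hfC]
  have h2a : α (nuFix fC) ≤ nuFix fA := by
    apply le_nuFix
    calc α (nuFix fC) = α (fC (nuFix fC)) := by rw [nuFix_fixed hfC]
      _ ≤ fA (α (nuFix fC)) := hsound _
  have h3a : γ (nuFix fA) ≤ nuFix fC := by
    apply le_nuFix
    calc γ (nuFix fA) = γ (fA (nuFix fA)) := by rw [nuFix_fixed hfA]
      _ ≤ fC (γ (nuFix fA)) := hcomplG _
  have h2 : α (nuFix fC) = nuFix fA := by
    apply le_antisymm h2a
    calc nuFix fA = α (γ (nuFix fA)) := (hins _).symm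
      _ ≤ α (nuFix fC) := hgc.monotone_l h3a
  exact ⟨h1, h2, le_antisymm (hgc.le_iff_le.mp h2a) h3a, h4⟩
end

section
/- Let C and A be complete lattices, f_C : C → C and f_A : A → A monotone functions, and ⟨α, γ⟩ : C → A a Galois insertion. If f_C = γ ∘ f_A ∘ α, then α(μ f_C) = μ f_A, α(ν f_C) = ν f_A, μ f_C = γ(μ f_A), and ν f_C = γ(ν f_A). -/
/-- Galois insertions, single fixpoints: if `f_C = γ ∘ f_A ∘ α` then
`α (η f_C) = η f_A` and `η f_C = γ (η f_A)` for `η ∈ {μ, ν}`. -/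
theorem galois_insertion_single_strong
    {C A : Type*} [CompleteLattice C] [CompleteLattice A]
    (fC : C → C) (fA : A → A) (α : C → A) (γ : A → C)
    (hfC : Monotone fC) (hfA : Monotone fA)
    (hgc : GaloisConnection α γ) (hins : ∀ a : A, α (γ a) = a)
    (heq : ∀ c : C, fC c = γ (fA (α c))) :
    α (muFix fC) = muFix fA ∧ α (nuFix fC) = nuFix fA ∧
      muFix fC = γ (muFix fA) ∧ nuFix fC = γ (nuFix fA) := by
  have hμC : fC (muFix fC) = muFix fC := OrderHom.map_lfp ⟨fC, hfC⟩
  have hνC : fC (nuFix fC) = nuFix fC := OrderHom.map_gfp ⟨fC, hfC⟩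
  have hμA : fA (muFix fA) = muFix fA := OrderHom.map_lfp ⟨fA, hfA⟩
  have hνA : fA (nuFix fA) = nuFix fA := OrderHom.map_gfp ⟨fA, hfA⟩
  -- α (muFix fC) is a fixpoint of fA
  have hfixμ : fA (α (muFix fC)) = α (muFix fC) := by
    have := congrArg α hμC
    rwa [heq, hins] at this
  have hfixν : fA (α (nuFix fC)) = α (nuFix fC) := by
    have := congrArg α hνC
    rwa [heq, hins] at this
  -- γ (α (muFix fC)) = muFix fC
  have hγαμ : γ (α (muFix fC)) = muFix fC := by
    have := hμC
    rw [heq, hfixμ] at this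
    exact this
  have hγαν : γ (α (nuFix fC)) = nuFix fC := by
    have := hνC
    rw [heq, hfixν] at this
    exact this
  -- γ (muFix fA) and γ (nuFix fA) are fixpoints of fC
  have hfixγμ : fC (γ (muFix fA)) = γ (muFix fA) := by
    rw [heq, hins, hμA]
  have hfixγν : fC (γ (nuFix fA)) = γ (nuFix fA) := by
    rw [heq, hins, hνA]
  have h1 : muFix fC ≤ γ (muFix fA) := OrderHom.lfp_le ⟨fC, hfC⟩ hfixγμ.le
  have h2 : muFix fA ≤ α (muFix fC) := OrderHom.lfp_le ⟨fA, hfA⟩ hfixμ.le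
  have h3 : γ (nuFix fA) ≤ nuFix fC := OrderHom.le_gfp ⟨fC, hfC⟩ hfixγν.ge
  have h4 : α (nuFix fC) ≤ nuFix fA := OrderHom.le_gfp ⟨fA, hfA⟩ hfixν.ge
  have e1 : α (muFix fC) = muFix fA :=
    le_antisymm (by simpa [hins] using hgc.monotone_l h1) h2
  have e2 : nuFix fC = γ (nuFix fA) :=
    le_antisymm (by rw [← hγαν]; exact hgc.monotone_u h4) h3
  refine ⟨e1, ?_, ?_, e2⟩
  · rw [e2, hins]
  · rw [← e1, hγαμ]
end

section
/- Let (C, ⊑) and (A, ≤) be complete lattices, let E_C : x =_η f^C(x) and E_A : x =_η f^A(x) be systems of m fixpoint equations over C and A with the same markers η_1,…,η_m and with solutions s^C ∈ C^m and s^A ∈ A^m, and let γ be an m-tuple of monotone functions γ_i : A → C. If f^C ∘ Πγ ⊑ Πγ ∘ f^A (pointwise, viewing f^C and f^A as functions C^m → C^m and A^m → A^m), and γ_i is co-continuous and co-strict for each index i with η_i = ν, then s^C ⊑ Πγ(s^A). -/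
/-- `g` is (directed-)continuous: it preserves joins of (nonempty) directed sets. -/
def DirContinuous {L M : Type*} [CompleteLattice L] [CompleteLattice M] (g : L → M) : Prop :=
  ∀ S : Set L, S.Nonempty → DirectedOn (· ≤ ·) S → g (sSup S) = sSup (g '' S)

/-- `g` is strict: it maps bottom to bottom. -/
def BotStrict {L M : Type*} [CompleteLattice L] [CompleteLattice M] (g : L → M) : Prop :=
  g ⊥ = ⊥

/-- `g` is co-continuous: it preserves meets of (nonempty) codirected sets. -/
def CodirContinuous {L M : Type*} [CompleteLattice L] [CompleteLattice M] (g : L → M) : Prop :=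
  ∀ S : Set L, S.Nonempty → DirectedOn (· ≥ ·) S → g (sInf S) = sInf (g '' S)

/-- `g` is co-strict: it maps top to top. -/
def TopStrict {L M : Type*} [CompleteLattice L] [CompleteLattice M] (g : L → M) : Prop :=
  g ⊤ = ⊤
/-- Marker of a fixpoint equation: least (`mu`) or greatest (`nu`) fixpoint. -/
inductive EqMarker : Type
  | mu
  | nu

/-- Solution of a system of `m` fixpoint equations `x =_η f(x)` over a complete
lattice `L`, defined by recursion on `m`: the last variable is treated as a
parameter, the first `m-1` equations are solved recursively, the resulting
one-variable equation is solved by taking the least or greatest fixpoint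
according to the marker of the last equation, and the value is substituted
back. -/
def eqSol {L : Type*} [CompleteLattice L] :
    (m : ℕ) → ((Fin m → L) → Fin m → L) → (Fin m → EqMarker) → (Fin m → L)
  | 0, _, _ => fun i => i.elim0
  | m + 1, f, η =>
    let solPrev : L → Fin m → L := fun x =>
      eqSol m (fun v j => f (Fin.snoc v x) j.castSucc) (fun j => η j.castSucc)
    let g : L → L := fun x => f (Fin.snoc (solPrev x) x) (Fin.last m)
    let slast : L :=
      match η (Fin.last m) with
      | EqMarker.mu => muFix g
      | EqMarker.nu => nuFix g
    Fin.snoc (solPrev slast) slast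

section Main
open OrdinalApprox

variable {C A L : Type*} [CompleteLattice C] [CompleteLattice A] [CompleteLattice L]

lemma mySnoc_mono {m : ℕ} {v w : Fin m → L} {x y : L} (h : v ≤ w) (hxy : x ≤ y) :
    (Fin.snoc v x : Fin (m+1) → L) ≤ Fin.snoc w y := by
  intro k
  induction k using Fin.lastCases with
  | last => simpa using hxy
  | cast j => simpa using h j

lemma muFix_le_muFix {f g : L → L} (h : ∀ x, f x ≤ g x) : muFix f ≤ muFix g :=
  sInf_le_sInf (fun x hx => le_trans (h x) hx)

lemma nuFix_le_nuFix {f g : L → L} (h : ∀ x, f x ≤ g x) : nuFix f ≤ nuFix g :=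
  sSup_le_sSup (fun x hx => le_trans hx (h x))

lemma sound_mu (gC : C → C) (gA : A → A) (_hgC : Monotone gC) (hgA : Monotone gA)
    (γ : A → C) (_hγ : Monotone γ) (hs : ∀ x, gC (γ x) ≤ γ (gA x)) :
    muFix gC ≤ γ (muFix gA) := by
  have hfix : gA (muFix gA) = muFix gA := OrderHom.map_lfp (⟨gA, hgA⟩ : A →o A)
  apply sInf_le
  show gC (γ (muFix gA)) ≤ γ (muFix gA)
  calc gC (γ (muFix gA)) ≤ γ (gA (muFix gA)) := hs _
    _ = γ (muFix gA) := by rw [hfix]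

unseal OrdinalApprox.lfpApprox OrdinalApprox.gfpApprox in
lemma sound_nu (gC : C → C) (gA : A → A) (hgC : Monotone gC) (hgA : Monotone gA)
    (γ : A → C) (_hγ : Monotone γ) (hs : ∀ x, gC (γ x) ≤ γ (gA x))
    (hcc : CodirContinuous γ) (hts : TopStrict γ) :
    nuFix gC ≤ γ (nuFix gA) := by
  have hfixC : gC (nuFix gC) = nuFix gC := OrderHom.map_gfp (⟨gC, hgC⟩ : C →o C)
  set GA : A →o A := ⟨gA, hgA⟩ with hGA
  have key : ∀ o : Ordinal, nuFix gC ≤ γ (gfpApprox GA ⊤ o) := by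
    intro o
    induction o using Ordinal.induction with
    | h o ih =>
      have hunfold : gfpApprox GA ⊤ o =
          sInf ({ x | ∃ b : Ordinal, ∃ _ : b < o, GA (gfpApprox GA ⊤ b) = x } ∪ {⊤}) := by
        rw [gfpApprox, sInf_union, sInf_singleton, inf_comm]
        congr 1
        apply le_antisymm
        · exact le_sInf (by rintro _ ⟨b, hb, rfl⟩; exact iInf₂_le b hb)
        · exact le_iInf₂ (fun b hb => sInf_le ⟨b, hb, rfl⟩)
      set S : Set A :=
        { x | ∃ b : Ordinal, ∃ _ : b < o, GA (gfpApprox GA ⊤ b) = x } ∪ {⊤} with hS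
      have hne : S.Nonempty := ⟨⊤, Or.inr rfl⟩
      have hdir : DirectedOn (· ≥ ·) S := by
        rintro x hx y hy
        rcases hx with ⟨b1, hb1, rfl⟩ | rfl
        · rcases hy with ⟨b2, hb2, rfl⟩ | rfl
          · exact ⟨GA (gfpApprox GA ⊤ (max b1 b2)),
              Or.inl ⟨max b1 b2, max_lt hb1 hb2, rfl⟩,
              GA.mono (gfpApprox_antitone GA (le_max_left _ _)),
              GA.mono (gfpApprox_antitone GA (le_max_right _ _))⟩
          · exact ⟨_, Or.inl ⟨b1, hb1, rfl⟩, le_refl _, le_top⟩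
        · exact ⟨y, hy, le_top, le_refl _⟩
      rw [hunfold, hcc S hne hdir]
      apply le_sInf
      rintro c ⟨x, hx, rfl⟩
      rcases hx with ⟨b, hb, rfl⟩ | rfl
      · calc nuFix gC = gC (nuFix gC) := hfixC.symm
          _ ≤ gC (γ (gfpApprox GA ⊤ b)) := hgC (ih b hb)
          _ ≤ γ (gA (gfpApprox GA ⊤ b)) := hs _
      · exact le_top.trans hts.symm.le
  have h := key (Cardinal.ord (Order.succ (Cardinal.mk A)))
  rwa [gfpApprox_ord_eq_gfp] at h

lemma eqSol_le_eqSol : ∀ (m : ℕ) (f g : (Fin m → L) → Fin m → L),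
    Monotone f → Monotone g → (∀ v, f v ≤ g v) →
    ∀ η : Fin m → EqMarker, eqSol m f η ≤ eqSol m g η
  | 0, _, _, _, _, _, _ => fun i => i.elim0
  | m + 1, f, g, hf, hg, hfg, η => by
    have hmF : ∀ x : L, Monotone (fun v j => f (Fin.snoc v x) (Fin.castSucc j)) :=
      fun x v w hvw j => hf (mySnoc_mono hvw le_rfl) _
    have hmG : ∀ x : L, Monotone (fun v j => g (Fin.snoc v x) (Fin.castSucc j)) :=
      fun x v w hvw j => hg (mySnoc_mono hvw le_rfl) _
    have hprev : ∀ x y : L, x ≤ y →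
        eqSol m (fun v j => f (Fin.snoc v x) (Fin.castSucc j)) (fun j => η (Fin.castSucc j)) ≤
        eqSol m (fun v j => g (Fin.snoc v y) (Fin.castSucc j)) (fun j => η (Fin.castSucc j)) :=
      fun x y hxy => eqSol_le_eqSol m _ _ (hmF x) (hmG y)
        (fun v j => le_trans (hfg _ _) (hg (mySnoc_mono le_rfl hxy) _)) _
    have hglast : ∀ x : L,
        f (Fin.snoc (eqSol m (fun v j => f (Fin.snoc v x) (Fin.castSucc j))
            (fun j => η (Fin.castSucc j))) x) (Fin.last m) ≤
        g (Fin.snoc (eqSol m (fun v j => g (Fin.snoc v x) (Fin.castSucc j))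
            (fun j => η (Fin.castSucc j))) x) (Fin.last m) :=
      fun x => le_trans (hfg _ _) (hg (mySnoc_mono (hprev x x le_rfl) le_rfl) _)
    cases hη : η (Fin.last m) with
    | mu =>
      simp only [eqSol, hη]
      exact mySnoc_mono (hprev _ _ (muFix_le_muFix hglast)) (muFix_le_muFix hglast)
    | nu =>
      simp only [eqSol, hη]
      exact mySnoc_mono (hprev _ _ (nuFix_le_nuFix hglast)) (nuFix_le_nuFix hglast)

lemma sound_aux : ∀ (m : ℕ) (fC : (Fin m → C) → Fin m → C) (fA : (Fin m → A) → Fin m → A),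
    Monotone fC → Monotone fA → ∀ (η : Fin m → EqMarker) (γ : Fin m → A → C),
    (∀ i, Monotone (γ i)) →
    (∀ (v : Fin m → A) (i : Fin m), fC (fun j => γ j (v j)) i ≤ γ i (fA v i)) →
    (∀ i, η i = EqMarker.nu → CodirContinuous (γ i) ∧ TopStrict (γ i)) →
    ∀ i, eqSol m fC η i ≤ γ i (eqSol m fA η i)
  | 0, _, _, _, _, _, _, _, _, _ => fun i => i.elim0
  | m + 1, fC, fA, hfC, hfA, η, γ, hγ, hsound, hν => by
    have hsnocγ : ∀ (v : Fin m → A) (x : A),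
        (fun k => γ k ((Fin.snoc v x : Fin (m+1) → A) k)) =
          (Fin.snoc (fun j => γ (Fin.castSucc j) (v j)) (γ (Fin.last m) x) : Fin (m+1) → C) := by
      intro v x
      funext k
      induction k using Fin.lastCases with
      | last => simp
      | cast j => simp
    have hmC : ∀ x : C, Monotone (fun v j => fC (Fin.snoc v x) (Fin.castSucc j)) :=
      fun x v w hvw j => hfC (mySnoc_mono hvw le_rfl) _
    have hmA : ∀ x : A, Monotone (fun v j => fA (Fin.snoc v x) (Fin.castSucc j)) :=
      fun x v w hvw j => hfA (mySnoc_mono hvw le_rfl) _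
    -- induction hypothesis for the truncated systems
    have hIH : ∀ x : A, ∀ j : Fin m,
        eqSol m (fun v j => fC (Fin.snoc v (γ (Fin.last m) x)) (Fin.castSucc j))
            (fun j => η (Fin.castSucc j)) j ≤
        γ (Fin.castSucc j)
          (eqSol m (fun v j => fA (Fin.snoc v x) (Fin.castSucc j))
            (fun j => η (Fin.castSucc j)) j) :=
      fun x => sound_aux m _ _ (hmC _) (hmA _) _ (fun j => γ (Fin.castSucc j))
        (fun j => hγ _)
        (fun v j => by
          have h := hsound (Fin.snoc v x) (Fin.castSucc j)
          rw [hsnocγ v x] at h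
          exact h)
        (fun j hj => hν _ hj)
    -- monotonicity of solPrev in the parameter
    have hprevC : ∀ x y : C, x ≤ y →
        eqSol m (fun v j => fC (Fin.snoc v x) (Fin.castSucc j)) (fun j => η (Fin.castSucc j)) ≤
        eqSol m (fun v j => fC (Fin.snoc v y) (Fin.castSucc j)) (fun j => η (Fin.castSucc j)) :=
      fun x y hxy => eqSol_le_eqSol m _ _ (hmC x) (hmC y)
        (fun v j => hfC (mySnoc_mono le_rfl hxy) _) _
    have hprevA : ∀ x y : A, x ≤ y →
        eqSol m (fun v j => fA (Fin.snoc v x) (Fin.castSucc j)) (fun j => η (Fin.castSucc j)) ≤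
        eqSol m (fun v j => fA (Fin.snoc v y) (Fin.castSucc j)) (fun j => η (Fin.castSucc j)) :=
      fun x y hxy => eqSol_le_eqSol m _ _ (hmA x) (hmA y)
        (fun v j => hfA (mySnoc_mono le_rfl hxy) _) _
    have hgCmono : Monotone (fun x : C =>
        fC (Fin.snoc (eqSol m (fun v j => fC (Fin.snoc v x) (Fin.castSucc j))
          (fun j => η (Fin.castSucc j))) x) (Fin.last m)) :=
      fun x y hxy => hfC (mySnoc_mono (hprevC x y hxy) hxy) _
    have hgAmono : Monotone (fun x : A =>
        fA (Fin.snoc (eqSol m (fun v j => fA (Fin.snoc v x) (Fin.castSucc j))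
          (fun j => η (Fin.castSucc j))) x) (Fin.last m)) :=
      fun x y hxy => hfA (mySnoc_mono (hprevA x y hxy) hxy) _
    -- soundness for the last equation's function
    have hgsound : ∀ x : A,
        fC (Fin.snoc (eqSol m (fun v j => fC (Fin.snoc v (γ (Fin.last m) x)) (Fin.castSucc j))
          (fun j => η (Fin.castSucc j))) (γ (Fin.last m) x)) (Fin.last m) ≤
        γ (Fin.last m)
          (fA (Fin.snoc (eqSol m (fun v j => fA (Fin.snoc v x) (Fin.castSucc j))
            (fun j => η (Fin.castSucc j))) x) (Fin.last m)) := by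
      intro x
      have h2 := hsound (Fin.snoc (eqSol m (fun v j => fA (Fin.snoc v x) (Fin.castSucc j))
        (fun j => η (Fin.castSucc j))) x) (Fin.last m)
      rw [hsnocγ] at h2
      exact le_trans (hfC (mySnoc_mono (fun j => hIH x j) le_rfl) _) h2
    cases hη : η (Fin.last m) with
    | mu =>
      have hsl := sound_mu _ _ hgCmono hgAmono (γ (Fin.last m)) (hγ _) hgsound
      simp only [eqSol, hη]
      intro i
      induction i using Fin.lastCases with
      | last => simpa using hsl
      | cast j =>
        simp only [Fin.snoc_castSucc]
        refine le_trans (eqSol_le_eqSol m _ _ (hmC _) (hmC _)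
          (fun v j => hfC (mySnoc_mono le_rfl hsl) _) _ j) (hIH _ j)
    | nu =>
      have hccts := hν (Fin.last m) hη
      have hsl := sound_nu _ _ hgCmono hgAmono (γ (Fin.last m)) (hγ _) hgsound
        hccts.1 hccts.2
      simp only [eqSol, hη]
      intro i
      induction i using Fin.lastCases with
      | last => simpa using hsl
      | cast j =>
        simp only [Fin.snoc_castSucc]
        refine le_trans (eqSol_le_eqSol m _ _ (hmC _) (hmC _)
          (fun v j => hfC (mySnoc_mono le_rfl hsl) _) _ j) (hIH _ j)

end Main

/-- Sound concretisation for systems of fixpoint equations: if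
`f^C ∘ Πγ ⊑ Πγ ∘ f^A` pointwise and each `γ_i` with `η_i = ν` is co-continuous
and co-strict, then `s^C ⊑ Πγ(s^A)`. -/
theorem sound_concretisation_for_systems
    {C A : Type*} [CompleteLattice C] [CompleteLattice A]
    (m : ℕ) (fC : (Fin m → C) → Fin m → C) (fA : (Fin m → A) → Fin m → A)
    (hfC : Monotone fC) (hfA : Monotone fA)
    (η : Fin m → EqMarker)
    (γ : Fin m → A → C) (hγ : ∀ i, Monotone (γ i))
    (hsound : ∀ (v : Fin m → A) (i : Fin m), fC (fun j => γ j (v j)) i ≤ γ i (fA v i))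
    (hν : ∀ i, η i = EqMarker.nu → CodirContinuous (γ i) ∧ TopStrict (γ i)) :
    ∀ i, eqSol m fC η i ≤ γ i (eqSol m fA η i) := by
  exact sound_aux m fC fA hfC hfA η γ hγ hsound hν
end

section
/- Let (C, ⊑) and (A, ≤) be complete lattices, let E_C : x =_η f^C(x) and E_A : x =_η f^A(x) be systems of m fixpoint equations over C and A with the same markers and with solutions s^C ∈ C^m and s^A ∈ A^m, and let ⟨α_i, γ_i⟩ : C → A be Galois connections for i = 1,…,m. Then the conditions f^C ∘ Πγ ⊑ Πγ ∘ f^A and Πα ∘ f^C ≤ f^A ∘ Πα are equivalent, and if either holds then Πα(s^C) ≤ s^A and s^C ⊑ Πγ(s^A). -/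
section Aux

variable {L : Type*} [CompleteLattice L]

lemma muFix_prefix {g : L → L} (hg : Monotone g) : g (muFix g) ≤ muFix g :=
  le_sInf fun x hx => (hg (sInf_le hx)).trans hx

lemma nuFix_postfix {g : L → L} (hg : Monotone g) : nuFix g ≤ g (nuFix g) :=
  sSup_le fun x hx => le_trans hx (hg (le_sSup hx))

lemma muFix_le_s8 {g : L → L} {x : L} (hx : g x ≤ x) : muFix g ≤ x := sInf_le hx

lemma le_nuFix_s8 {g : L → L} {x : L} (hx : x ≤ g x) : x ≤ nuFix g := le_sSup hx

lemma muFix_mono {g g' : L → L} (h : ∀ x, g x ≤ g' x) : muFix g ≤ muFix g' :=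
  sInf_le_sInf fun x hx => le_trans (h x) hx

lemma nuFix_mono {g g' : L → L} (h : ∀ x, g x ≤ g' x) : nuFix g ≤ nuFix g' :=
  sSup_le_sSup fun x hx => le_trans hx (h x)

lemma snoc_le_snoc {m : ℕ} {u w : Fin m → L} {x y : L} (huw : u ≤ w) (hxy : x ≤ y) :
    (Fin.snoc u x : Fin (m+1) → L) ≤ Fin.snoc w y := by
  intro k
  induction k using Fin.lastCases with
  | last => simpa using hxy
  | cast j => simpa using huw j

/-- The partial-solution function for the first `m` equations, with the last
variable fixed to `x`. -/
def solPrevD (m : ℕ) (f : (Fin (m+1) → L) → Fin (m+1) → L) (η : Fin (m+1) → EqMarker)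
    (x : L) : Fin m → L :=
  eqSol m (fun v j => f (Fin.snoc v x) j.castSucc) (fun j => η j.castSucc)

def gD (m : ℕ) (f : (Fin (m+1) → L) → Fin (m+1) → L) (η : Fin (m+1) → EqMarker)
    (x : L) : L :=
  f (Fin.snoc (solPrevD m f η x) x) (Fin.last m)

def slastD (m : ℕ) (f : (Fin (m+1) → L) → Fin (m+1) → L) (η : Fin (m+1) → EqMarker) : L :=
  match η (Fin.last m) with
  | EqMarker.mu => muFix (gD m f η)
  | EqMarker.nu => nuFix (gD m f η)

lemma eqSol_succ (m : ℕ) (f : (Fin (m+1) → L) → Fin (m+1) → L) (η : Fin (m+1) → EqMarker) :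
    eqSol (m+1) f η = Fin.snoc (solPrevD m f η (slastD m f η)) (slastD m f η) := rfl

/-- `eqSol` is monotone in the system of functions (also allowing the
parameter of the partial solutions to vary). -/
lemma eqSol_mono : ∀ (m : ℕ) (f g : (Fin m → L) → Fin m → L),
    Monotone f → Monotone g → (∀ v, f v ≤ g v) → (η : Fin m → EqMarker) →
    eqSol m f η ≤ eqSol m g η := by
  intro m
  induction m with
  | zero => intro _ _ _ _ _ _ i; exact i.elim0
  | succ m ih =>
    intro f g hf hg hfg η
    have hsp : ∀ x y : L, x ≤ y → solPrevD m f η x ≤ solPrevD m g η y := by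
      intro x y hxy
      refine ih _ _ ?_ ?_ ?_ _
      · intro u w huw j; exact hf (snoc_le_snoc huw le_rfl) j.castSucc
      · intro u w huw j; exact hg (snoc_le_snoc huw le_rfl) j.castSucc
      · intro v j
        exact le_trans (hf (snoc_le_snoc (le_refl v) hxy) j.castSucc) (hfg _ j.castSucc)
    have hgD : ∀ x y : L, x ≤ y → gD m f η x ≤ gD m g η y := by
      intro x y hxy
      exact le_trans (hf (snoc_le_snoc (hsp x y hxy) hxy) (Fin.last m)) (hfg _ (Fin.last m))
    have hslast : slastD m f η ≤ slastD m g η := by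
      unfold slastD
      cases η (Fin.last m) with
      | mu => exact muFix_mono fun x => hgD x x le_rfl
      | nu => exact nuFix_mono fun x => hgD x x le_rfl
    rw [eqSol_succ, eqSol_succ]
    exact snoc_le_snoc (hsp _ _ hslast) hslast

lemma gD_mono (m : ℕ) (f : (Fin (m+1) → L) → Fin (m+1) → L) (hf : Monotone f)
    (η : Fin (m+1) → EqMarker) : Monotone (gD m f η) := by
  intro x y hxy
  have hsp : solPrevD m f η x ≤ solPrevD m f η y := by
    refine eqSol_mono m _ _ ?_ ?_ ?_ _
    · intro u w huw j; exact hf (snoc_le_snoc huw le_rfl) j.castSucc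
    · intro u w huw j; exact hf (snoc_le_snoc huw le_rfl) j.castSucc
    · intro v j; exact hf (snoc_le_snoc (le_refl v) hxy) j.castSucc
  exact hf (snoc_le_snoc hsp hxy) (Fin.last m)

end Aux

/-- Key induction: the abstraction soundness condition implies
`s^C ⊑ Πγ(s^A)` componentwise. -/
lemma galois_key {C A : Type*} [CompleteLattice C] [CompleteLattice A] :
    ∀ (m : ℕ) (fC : (Fin m → C) → Fin m → C) (fA : (Fin m → A) → Fin m → A),
    Monotone fC → Monotone fA → ∀ (η : Fin m → EqMarker)
    (α : Fin m → C → A) (γ : Fin m → A → C),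
    (∀ i, GaloisConnection (α i) (γ i)) →
    (∀ (v : Fin m → C) (i : Fin m), α i (fC v i) ≤ fA (fun j => α j (v j)) i) →
    ∀ i, eqSol m fC η i ≤ γ i (eqSol m fA η i) := by
  intro m
  induction m with
  | zero => intro _ _ _ _ _ _ _ _ _ i; exact i.elim0
  | succ m ih =>
    intro fC fA hfC hfA η α γ hgc hcond
    -- the γ-form of the condition
    have hcondγ : ∀ (v : Fin m.succ → A) (i : Fin m.succ),
        fC (fun j => γ j (v j)) i ≤ γ i (fA v i) := by
      intro v i
      refine (hgc i _ _).mp (le_trans (hcond _ i) (hfA ?_ i))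
      intro j; exact (hgc j).l_u_le (v j)
    -- soundness for the partial solutions
    have hsp : ∀ (xC : C) (xA : A), xC ≤ γ (Fin.last m) xA →
        ∀ j, solPrevD m fC η xC j ≤ γ j.castSucc (solPrevD m fA η xA j) := by
      intro xC xA hx
      refine ih _ _ ?_ ?_ _ (fun j => α j.castSucc) (fun j => γ j.castSucc)
        (fun j => hgc j.castSucc) ?_
      · intro u w huw j; exact hfC (snoc_le_snoc huw le_rfl) j.castSucc
      · intro u w huw j; exact hfA (snoc_le_snoc huw le_rfl) j.castSucc
      · intro v j
        refine le_trans (hcond (Fin.snoc v xC) j.castSucc) (hfA ?_ j.castSucc)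
        intro k
        induction k using Fin.lastCases with
        | last => simpa using (hgc (Fin.last m) _ _).mpr hx
        | cast j => simp
    have hmC : Monotone (gD m fC η) := gD_mono m fC hfC η
    have hmA : Monotone (gD m fA η) := gD_mono m fA hfA η
    -- the last component
    have hslast : slastD m fC η ≤ γ (Fin.last m) (slastD m fA η) := by
      unfold slastD
      cases η (Fin.last m) with
      | mu =>
        refine muFix_le_s8 ?_
        have h1 : gD m fC η (γ (Fin.last m) (muFix (gD m fA η))) ≤
            γ (Fin.last m) (gD m fA η (muFix (gD m fA η))) := by
          refine le_trans (hfC ?_ (Fin.last m))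
            (hcondγ (Fin.snoc (solPrevD m fA η (muFix (gD m fA η))) (muFix (gD m fA η)))
              (Fin.last m))
          intro k
          induction k using Fin.lastCases with
          | last => simp
          | cast j =>
            simpa using hsp (γ (Fin.last m) (muFix (gD m fA η))) (muFix (gD m fA η)) le_rfl j
        exact le_trans h1 ((hgc (Fin.last m)).monotone_u (muFix_prefix hmA))
      | nu =>
        refine (hgc (Fin.last m) _ _).mp (le_nuFix_s8 ?_)
        have h1 : α (Fin.last m) (gD m fC η (nuFix (gD m fC η))) ≤
            gD m fA η (α (Fin.last m) (nuFix (gD m fC η))) := by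
          refine le_trans (hcond (Fin.snoc (solPrevD m fC η (nuFix (gD m fC η)))
            (nuFix (gD m fC η))) (Fin.last m)) (hfA ?_ (Fin.last m))
          intro k
          induction k using Fin.lastCases with
          | last => simp
          | cast j =>
            simp only [Fin.snoc_castSucc]
            exact (hgc j.castSucc _ _).mpr
              (hsp (nuFix (gD m fC η)) (α (Fin.last m) (nuFix (gD m fC η)))
                ((hgc (Fin.last m)).le_u_l _) j)
        exact le_trans ((hgc (Fin.last m)).monotone_l (nuFix_postfix hmC)) h1
    -- assemble
    intro i
    rw [eqSol_succ, eqSol_succ]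
    induction i using Fin.lastCases with
    | last => simpa using hslast
    | cast j => simpa using hsp _ _ hslast j

/-- Abstraction via Galois connections, soundness: the two soundness
conditions (for the concretisation and for the abstraction) are equivalent,
and either of them implies `Πα(s^C) ≤ s^A` and `s^C ⊑ Πγ(s^A)`. -/
theorem galois_soundness_for_systems
    {C A : Type*} [CompleteLattice C] [CompleteLattice A]
    (m : ℕ) (fC : (Fin m → C) → Fin m → C) (fA : (Fin m → A) → Fin m → A)
    (hfC : Monotone fC) (hfA : Monotone fA)
    (η : Fin m → EqMarker)
    (α : Fin m → C → A) (γ : Fin m → A → C)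
    (hgc : ∀ i, GaloisConnection (α i) (γ i)) :
    ((∀ (v : Fin m → A) (i : Fin m), fC (fun j => γ j (v j)) i ≤ γ i (fA v i)) ↔
      (∀ (v : Fin m → C) (i : Fin m), α i (fC v i) ≤ fA (fun j => α j (v j)) i)) ∧
    ((∀ (v : Fin m → C) (i : Fin m), α i (fC v i) ≤ fA (fun j => α j (v j)) i) →
      (∀ i, α i (eqSol m fC η i) ≤ eqSol m fA η i) ∧
      (∀ i, eqSol m fC η i ≤ γ i (eqSol m fA η i))) := by
  constructor
  · constructor
    · intro h v i
      refine (hgc i _ _).mpr (le_trans (hfC (fun j => (hgc j).le_u_l (v j)) i)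
        (h (fun j => α j (v j)) i))
    · intro h v i
      refine (hgc i _ _).mp (le_trans (h _ i) (hfA (fun j => (hgc j).l_u_le (v j)) i))
  · intro h
    have key := galois_key m fC fA hfC hfA η α γ hgc h
    exact ⟨fun i => (hgc i _ _).mpr (key i), key⟩
end

section
/- Let L be a complete lattice, f : L → L a monotone function, and u : L → L an f-compatible closure. Then ν f = ν(f ∘ u); if, in addition, u is continuous and strict, then also μ f = μ(f ∘ u). -/
/-- For an `f`-compatible closure `u`, `ν f = ν (f ∘ u)`; if moreover `u` is
continuous and strict, then `μ f = μ (f ∘ u)`. -/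
theorem compatible_closure_sound_complete
    {L : Type*} [CompleteLattice L]
    (f u : L → L) (hf : Monotone f) (hu : Monotone u)
    (hext : ∀ l : L, l ≤ u l) (hidem : ∀ l : L, u (u l) = u l)
    (hcompat : ∀ l : L, u (f l) ≤ f (u l)) :
    nuFix f = nuFix (f ∘ u) ∧
      (DirContinuous u → BotStrict u → muFix f = muFix (f ∘ u)) := by
  constructor
  · apply le_antisymm
    · exact sSup_le_sSup fun x hx => le_trans hx (hf (hext x))
    · apply sSup_le
      intro x hx
      have h1 : u x ≤ f (u x) := by
        calc u x ≤ u (f (u x)) := hu hx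
          _ ≤ f (u (u x)) := hcompat _
          _ = f (u x) := by rw [hidem]
      exact le_trans (hext x) (le_sSup h1)
  · intro hcont hstrict
    set F : L →o L := ⟨f, hf⟩ with hF
    have key : ∀ a : Ordinal, u (OrdinalApprox.lfpApprox F ⊥ a) ≤
        OrdinalApprox.lfpApprox F ⊥ a := by
      intro a
      induction a using Ordinal.induction with
      | h a ih =>
        rw [OrdinalApprox.lfpApprox]
        set S : Set L :=
          {x | ∃ b : Ordinal, ∃ _ : b < a, F (OrdinalApprox.lfpApprox F ⊥ b) = x} ∪ {⊥} with hS
        have hne : S.Nonempty := ⟨⊥, Or.inr rfl⟩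
        have hdir : DirectedOn (· ≤ ·) S := by
          rintro x (⟨b, hb, rfl⟩ | rfl) y (⟨c, hc, rfl⟩ | rfl)
          · rcases le_total b c with h | h
            · exact ⟨_, Or.inl ⟨c, hc, rfl⟩,
                hf (OrdinalApprox.lfpApprox_monotone F h), le_refl _⟩
            · exact ⟨_, Or.inl ⟨b, hb, rfl⟩, le_refl _,
                hf (OrdinalApprox.lfpApprox_monotone F h)⟩
          · exact ⟨_, Or.inl ⟨b, hb, rfl⟩, le_refl _, bot_le⟩
          · exact ⟨_, Or.inl ⟨c, hc, rfl⟩, bot_le, le_refl _⟩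
          · exact ⟨⊥, Or.inr rfl, le_refl _, le_refl _⟩
        have hSeq : (⊥ ⊔ ⨆ b, ⨆ (_ : b < a), F (OrdinalApprox.lfpApprox F ⊥ b)) = sSup S := by
          apply le_antisymm
          · exact sup_le bot_le (iSup_le fun b => iSup_le fun hb => le_sSup (Or.inl ⟨b, hb, rfl⟩))
          · apply sSup_le
            rintro y (⟨b, hb, rfl⟩ | rfl)
            · exact le_sup_of_le_right (le_iSup₂_of_le b hb le_rfl)
            · exact bot_le
        rw [hSeq]
        rw [hcont S hne hdir]
        apply sSup_le
        rintro y ⟨x, hx, rfl⟩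
        rcases hx with ⟨b, hb, rfl⟩ | rfl
        · calc u (F (OrdinalApprox.lfpApprox F ⊥ b))
              ≤ f (u (OrdinalApprox.lfpApprox F ⊥ b)) := hcompat _
            _ ≤ f (OrdinalApprox.lfpApprox F ⊥ b) := hf (ih b hb)
            _ ≤ sSup S := le_sSup (Or.inl ⟨b, hb, rfl⟩)
        · rw [hstrict]; exact bot_le
    have hmueq : muFix f = F.lfp := rfl
    have hmu : u (muFix f) ≤ muFix f := by
      rw [hmueq, ← OrdinalApprox.lfpApprox_ord_eq_lfp F]
      exact key _
    have hpre : f (muFix f) ≤ muFix f := by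
      apply le_sInf
      intro x hx
      exact le_trans (hf (sInf_le hx)) hx
    apply le_antisymm
    · exact sInf_le_sInf fun x hx => le_trans (hf (hext x)) hx
    · apply sInf_le
      show f (u (muFix f)) ≤ muFix f
      exact le_trans (hf hmu) hpre
end

section
/- Let L be a complete lattice, f : L → L a monotone function, and u : L → L a monotone function. If u ∘ f ⊑ f ∘ u (pointwise), then ū ∘ f ⊑ f ∘ ū (pointwise). Moreover, if u is continuous and strict, then ū is continuous and strict. -/
/-- The least closure above `u`: `ū(x)` is the least fixpoint of `y ↦ u(y) ⊔ x`. -/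
def ubar {L : Type*} [CompleteLattice L] (u : L → L) : L → L :=
  fun x => muFix (fun y => u y ⊔ x)


lemma muFix_le_of {L : Type*} [CompleteLattice L] {g : L → L} {a : L}
    (h : g a ≤ a) : muFix g ≤ a := sInf_le h

lemma muFix_pre {L : Type*} [CompleteLattice L] {g : L → L} (hg : Monotone g) :
    g (muFix g) ≤ muFix g := by
  apply le_sInf
  intro a ha
  exact le_trans (hg (sInf_le ha)) ha

lemma ubar_pre {L : Type*} [CompleteLattice L] {u : L → L} (hu : Monotone u) (x : L) :
    u (ubar u x) ⊔ x ≤ ubar u x :=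
  muFix_pre (fun a b hab => sup_le_sup_right (hu hab) x)

lemma ubar_least {L : Type*} [CompleteLattice L] {u : L → L} {x a : L}
    (h : u a ⊔ x ≤ a) : ubar u x ≤ a := sInf_le h

lemma le_ubar {L : Type*} [CompleteLattice L] {u : L → L} (hu : Monotone u) (x : L) :
    x ≤ ubar u x := le_trans le_sup_right (ubar_pre hu x)

lemma ubar_mono {L : Type*} [CompleteLattice L] {u : L → L} (hu : Monotone u) :
    Monotone (ubar u) := by
  intro x y hxy
  exact ubar_least (le_trans (sup_le_sup_left hxy _) (ubar_pre hu y))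

/-- Properties of `ū`: if `u` is `f`-compatible then so is `ū`; if `u` is
continuous and strict then so is `ū`. -/
theorem ubar_compatible_continuous_strict
    {L : Type*} [CompleteLattice L]
    (f u : L → L) (hf : Monotone f) (hu : Monotone u) :
    ((∀ x : L, u (f x) ≤ f (u x)) → ∀ x : L, ubar u (f x) ≤ f (ubar u x)) ∧
    (DirContinuous u → BotStrict u → DirContinuous (ubar u) ∧ BotStrict (ubar u)) := by
  constructor
  · intro hcomp x
    apply ubar_least
    apply sup_le
    · calc u (f (ubar u x)) ≤ f (u (ubar u x)) := hcomp _
        _ ≤ f (ubar u x) := hf (le_trans le_sup_left (ubar_pre hu x))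
    · exact hf (le_ubar hu x)
  · intro hcont hstrict
    constructor
    · intro S hS hdir
      apply le_antisymm
      · apply ubar_least
        have hT : (ubar u '' S).Nonempty := hS.image _
        have hdT : DirectedOn (· ≤ ·) (ubar u '' S) := by
          rintro _ ⟨a, ha, rfl⟩ _ ⟨b, hb, rfl⟩
          obtain ⟨c, hc, hac, hbc⟩ := hdir a ha b hb
          exact ⟨ubar u c, ⟨c, hc, rfl⟩, ubar_mono hu hac, ubar_mono hu hbc⟩
        apply sup_le
        · rw [hcont _ hT hdT]
          apply sSup_le
          rintro _ ⟨_, ⟨s, hs, rfl⟩, rfl⟩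
          exact le_trans (le_trans le_sup_left (ubar_pre hu s))
            (le_sSup ⟨s, hs, rfl⟩)
        · apply sSup_le
          intro s hs
          exact le_trans (le_ubar hu s) (le_sSup ⟨s, hs, rfl⟩)
      · apply sSup_le
        rintro _ ⟨s, hs, rfl⟩
        exact ubar_mono hu (le_sSup hs)
    · apply le_antisymm _ bot_le
      apply ubar_least
      simp [BotStrict] at hstrict
      simp [hstrict]
end
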